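/- arXiv:1306.1091 — 7 statements merged into one kernel-verified Lean document; each statement's English description precedes it below -/
import Mathlib

section
/- Let 𝒳 and ℋ be standard Borel spaces, let f be a Markov kernel from ℋ × 𝒳 to ℋ and g a Markov kernel from ℋ to 𝒳. Let μ₀ be a probability measure on ℋ × 𝒳 (the law of (H₀, X₀)), and let μ' be the probability measure on ℋ × 𝒳 obtained by μ' = μ₀.bind (fun (h, x) => (f (h, x)).map (fun h₁ => (h₁, x))) (the law of (H₁, X₀)). Assume: (i) μ' and μ₀ have the same 𝒳-marginal and the disintegration of μ' over its 𝒳-marginal agrees almost everywhere with the disintegration of μ₀ over its 𝒳-marginal (i.e., P(H₁ | X₀) = P(H₀ | X₀)); (ii) the disintegration of μ' over its ℋ-marginal agrees almost everywhere with g (i.e., P(X₀ | H₁ = h) = g(h)). Then μ₀ is invariant under the GSN transition kernel T : ℋ × 𝒳 → ℋ × 𝒳 defined by T (h, x) = (f (h, x)).bind (fun h' => (g h').map (fun x' => (h', x'))); that is, μ₀.bind T = μ₀. -/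
/-!
A GSN step moves `H₀` to `H₁` by `f` and then draws a fresh `X` from `g H₁`, so it sends `μ₀`
to `μ'.fst ⊗ₘ g`. By (ii), `g` disintegrates `μ'` over its `ℋ`-marginal, so this is `μ'`;
by (i), `μ'` and `μ₀` have the same `𝒳`-marginal and the same disintegration over it,
so `μ' = μ₀`.
-/

open MeasureTheory ProbabilityTheory

namespace ProbabilityTheory.Kernel

variable {α β γ : Type*} {mα : MeasurableSpace α} {mβ : MeasurableSpace β}
  {mγ : MeasurableSpace γ}

lemma prod_deterministic_apply_eq_map (κ : Kernel α β) [IsSFiniteKernel κ] {φ : α → γ}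
    (hφ : Measurable φ) (a : α) :
    (κ ×ₖ deterministic φ hφ) a = (κ a).map (·, φ a) := by
  rw [prod_apply, deterministic_apply, Measure.prod_dirac]

lemma id_prod_apply_eq_map (κ : Kernel α β) [IsSFiniteKernel κ] (a : α) :
    (Kernel.id ×ₖ κ) a = (κ a).map (Prod.mk a) := by
  rw [prod_apply, id_apply, Measure.dirac_prod]

end ProbabilityTheory.Kernel

namespace MeasureTheory.Measure

variable {α β γ : Type*} {mα : MeasurableSpace α} {mβ : MeasurableSpace β}
  {mγ : MeasurableSpace γ}

lemma fst_bind_map_prodMk (μ : Measure α) (κ : Kernel α β) [IsSFiniteKernel κ] {φ : α → γ}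
    (hφ : Measurable φ) :
    (μ.bind fun a ↦ (κ a).map (·, φ a)).fst = κ ∘ₘ μ := by
  simp_rw [← Kernel.prod_deterministic_apply_eq_map κ hφ]
  rw [Measure.fst, map_comp _ _ measurable_fst, ← Kernel.fst_eq, Kernel.fst_prod]

lemma bind_bind_map_prodMk_eq_compProd (μ : Measure α) [SFinite μ] (κ : Kernel α β)
    [IsSFiniteKernel κ] (η : Kernel β γ) [IsSFiniteKernel η] :
    (μ.bind fun a ↦ (κ a).bind fun b ↦ (η b).map (Prod.mk b)) = (κ ∘ₘ μ) ⊗ₘ η := by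
  simp_rw [← Kernel.id_prod_apply_eq_map η, ← Kernel.comp_apply]
  rw [compProd_eq_comp_prod, comp_assoc]

variable [StandardBorelSpace β] [Nonempty β]

lemma fst_compProd_eq_of_condKernel_ae_eq (ρ : Measure (α × β)) [IsFiniteMeasure ρ]
    {η : Kernel α β} [IsSFiniteKernel η] (h : ∀ᵐ a ∂ρ.fst, ρ.condKernel a = η a) :
    ρ.fst ⊗ₘ η = ρ := by
  rw [← compProd_congr h, disintegrate]

lemma ext_of_fst_of_condKernel {ρ ν : Measure (α × β)} [IsFiniteMeasure ρ] [IsFiniteMeasure ν]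
    (hfst : ρ.fst = ν.fst) (hcond : ∀ᵐ a ∂ρ.fst, ρ.condKernel a = ν.condKernel a) : ρ = ν := by
  rw [← fst_compProd_eq_of_condKernel_ae_eq ρ hcond, hfst, disintegrate]

lemma ext_of_snd_of_condKernel_swap {ρ ν : Measure (β × α)} [IsFiniteMeasure ρ]
    [IsFiniteMeasure ν] (hsnd : ρ.snd = ν.snd)
    (hcond : ∀ᵐ a ∂ρ.snd, (ρ.map Prod.swap).condKernel a = (ν.map Prod.swap).condKernel a) :
    ρ = ν := by
  have hswap : Function.Injective (map (Prod.swap : β × α → α × β)) :=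
    MeasurableEquiv.prodComm.measurableEmbedding.map_injective
  exact hswap <| ext_of_fst_of_condKernel (by simpa using hsnd) (by simpa using hcond)

end MeasureTheory.Measure

/-- **Theorem 2 of the paper (invariance of the GSN Markov chain).**
Let 𝒳 and ℋ be standard Borel spaces, `f` a Markov kernel from `ℋ × 𝒳` to `ℋ`,
`g` a Markov kernel from `ℋ` to `𝒳`, `μ₀` the law of `(H₀, X₀)` and
`μ' = law (H₁, X₀)` obtained by applying `f`. If `P(H₁ | X₀) = P(H₀ | X₀)` and
`P(X₀ | H₁ = h) = g h`, then `μ₀` is invariant under the GSN transition kernel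
`T (h, x) = (f (h, x)).bind (fun h' => (g h').map (fun x' => (h', x')))`. -/
theorem gsn_stationary
    {H X : Type*}
    [MeasurableSpace H] [StandardBorelSpace H] [Nonempty H]
    [MeasurableSpace X] [StandardBorelSpace X] [Nonempty X]
    (f : Kernel (H × X) H) [IsMarkovKernel f]
    (g : Kernel H X) [IsMarkovKernel g]
    (μ₀ : Measure (H × X)) [IsProbabilityMeasure μ₀]
    (μ' : Measure (H × X)) [IsProbabilityMeasure μ']
    (hμ' : μ' = μ₀.bind (fun p => (f p).map (fun h₁ => (h₁, p.2))))
    -- (i) same 𝒳-marginal and P(H₁ | X₀) = P(H₀ | X₀)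
    (hsnd : μ'.snd = μ₀.snd)
    (hcond_X : ∀ᵐ x ∂μ₀.snd,
      (μ'.map Prod.swap).condKernel x = (μ₀.map Prod.swap).condKernel x)
    -- (ii) P(X₀ | H₁ = h) = g h
    (hcond_H : ∀ᵐ h ∂μ'.fst, μ'.condKernel h = g h) :
    μ₀.bind (fun p => (f p).bind (fun h' => (g h').map (fun x' => (h', x')))) = μ₀ := by
  rw [Measure.bind_bind_map_prodMk_eq_compProd,
    ← Measure.fst_bind_map_prodMk μ₀ f measurable_snd, ← hμ',
    Measure.fst_compProd_eq_of_condKernel_ae_eq μ' hcond_H]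
  exact Measure.ext_of_snd_of_condKernel_swap hsnd (hsnd ▸ hcond_X)
end

section
/- Let 𝒳 and ℋ be standard Borel spaces, f a Markov kernel from ℋ × 𝒳 to ℋ, g a Markov kernel from ℋ to 𝒳, μ₀ a probability measure on ℋ × 𝒳, and μ' = μ₀.bind (fun (h, x) => (f (h, x)).map (fun h₁ => (h₁, x))). Assume: (i) μ' and μ₀ have the same 𝒳-marginal and the disintegration of μ' over its 𝒳-marginal agrees almost everywhere with that of μ₀; (ii) the disintegration of μ' over its ℋ-marginal agrees almost everywhere with g. Let T be the kernel T (h, x) = (f (h, x)).bind (fun h' => (g h').map (fun x' => (h', x'))). Then for every natural number n, the n-fold iterate of the chain started from μ₀ has law μ₀ (i.e., applying μ ↦ μ.bind T to μ₀ n times yields μ₀); in particular, the 𝒳-marginal of the law of (H_n, X_n) equals the 𝒳-marginal of μ₀ for all n, so the stationary distribution of the chain has 𝒳-marginal equal to the law of X₀. -/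
/-!
Hypothesis (i) pins down `μ'` by its 𝒳-marginal and its disintegration over it, so `μ' = μ₀`:
one update of `H` from `f` leaves the joint law unchanged. The chain's step is that update
followed by resampling `X` from `g`, and by (ii) `g` is the conditional law of `X` given `H`
under `μ' = μ₀`, so the resampling leaves `μ₀` unchanged too. Hence `μ₀` is a fixed point of
`μ ↦ μ.bind T`.
-/

open MeasureTheory ProbabilityTheory

section GiryMonad

variable {α β γ Ω : Type*} [MeasurableSpace α] [MeasurableSpace β] [MeasurableSpace γ]
  [MeasurableSpace Ω]

namespace ProbabilityTheory.Kernel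

lemma measurable_map_comp_prodMk (κ : Kernel α β) [IsSFiniteKernel κ]
    {φ : α × β → γ} (hφ : Measurable φ) :
    Measurable fun a => (κ a).map (fun b => φ (a, b)) := by
  refine Measure.measurable_of_measurable_coe _ fun s hs => ?_
  have h_eq : (fun a => (κ a).map (fun b => φ (a, b)) s)
      = fun a => κ a (Prod.mk a ⁻¹' (φ ⁻¹' s)) := by
    funext a
    rw [Measure.map_apply (by fun_prop) hs]
    rfl
  rw [h_eq]
  exact measurable_kernel_prodMk_left (hφ hs)

lemma measurable_map_prodMk (κ : Kernel α β) [IsSFiniteKernel κ] :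
    Measurable fun a => (κ a).map (Prod.mk a) :=
  κ.measurable_map_comp_prodMk (φ := id) measurable_id

end ProbabilityTheory.Kernel

namespace MeasureTheory.Measure

lemma bind_map (m : Measure α) {f : α → β} (hf : Measurable f)
    {g : β → Measure γ} (hg : Measurable g) :
    (m.map f).bind g = m.bind (fun a => g (f a)) := by
  ext s hs
  rw [bind_apply hs hg.aemeasurable, bind_apply hs (by fun_prop)]
  exact lintegral_map ((measurable_coe hs).comp hg) hf

lemma compProd_eq_bind (m : Measure α) [SFinite m] (κ : Kernel α β) [IsSFiniteKernel κ] :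
    m ⊗ₘ κ = m.bind (fun a => (κ a).map (Prod.mk a)) := by
  ext s hs
  rw [compProd_apply hs, bind_apply hs κ.measurable_map_prodMk.aemeasurable]
  refine lintegral_congr fun a => ?_
  rw [map_apply measurable_prodMk_left hs]

lemma bind_map_prodMk_fst (ρ : Measure (α × β)) [SFinite ρ] (κ : Kernel α β)
    [IsSFiniteKernel κ] :
    ρ.bind (fun q => (κ q.1).map (Prod.mk q.1)) = ρ.fst ⊗ₘ κ := by
  rw [compProd_eq_bind, Measure.fst, bind_map ρ measurable_fst κ.measurable_map_prodMk]

section StandardBorel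

variable [StandardBorelSpace Ω] [Nonempty Ω]

lemma bind_map_prodMk_fst_eq_self {ρ : Measure (α × Ω)} [IsFiniteMeasure ρ]
    {κ : Kernel α Ω} [IsSFiniteKernel κ] (h : ∀ᵐ a ∂ρ.fst, ρ.condKernel a = κ a) :
    ρ.bind (fun q => (κ q.1).map (Prod.mk q.1)) = ρ := by
  rw [bind_map_prodMk_fst, ← compProd_congr h, disintegrate ρ ρ.condKernel]

lemma eq_of_fst_eq_of_condKernel_ae_eq {ρ ρ' : Measure (α × Ω)} [IsFiniteMeasure ρ]
    [IsFiniteMeasure ρ'] (hfst : ρ.fst = ρ'.fst)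
    (h : ∀ᵐ a ∂ρ.fst, ρ.condKernel a = ρ'.condKernel a) : ρ = ρ' := by
  rw [← ρ.disintegrate ρ.condKernel, ← ρ'.disintegrate ρ'.condKernel, compProd_congr h, hfst]

lemma eq_of_snd_eq_of_condKernel_swap_ae_eq {ρ ρ' : Measure (Ω × β)} [IsFiniteMeasure ρ]
    [IsFiniteMeasure ρ'] (hsnd : ρ.snd = ρ'.snd)
    (h : ∀ᵐ b ∂ρ.snd, (ρ.map Prod.swap).condKernel b = (ρ'.map Prod.swap).condKernel b) :
    ρ = ρ' := by
  refine MeasurableEquiv.prodComm.map_measurableEquiv_injective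
    (?_ : ρ.map Prod.swap = ρ'.map Prod.swap)
  exact eq_of_fst_eq_of_condKernel_ae_eq (by simpa using hsnd) (by simpa using h)

end StandardBorel

end MeasureTheory.Measure

end GiryMonad

/-- **Theorem 2 of the paper:** `P(X_t = x, H_t = h) = P(X_0 = x, H_0 = h)` for all `t ≥ 0`.
Under the GSN hypotheses (`P(H₁ | X₀) = P(H₀ | X₀)` and `P(X₀ | H₁ = h) = g h`),
the `n`-fold iterate of the chain started from `μ₀` has law `μ₀` for every `n`;
in particular the 𝒳-marginal of the law of `(H_n, X_n)` equals that of `μ₀`,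
so the stationary distribution of the chain has 𝒳-marginal the law of `X₀`. -/
theorem gsn_iterate_law
    {H X : Type*}
    [MeasurableSpace H] [StandardBorelSpace H] [Nonempty H]
    [MeasurableSpace X] [StandardBorelSpace X] [Nonempty X]
    (f : Kernel (H × X) H) [IsMarkovKernel f]
    (g : Kernel H X) [IsMarkovKernel g]
    (μ₀ : Measure (H × X)) [IsProbabilityMeasure μ₀]
    (μ' : Measure (H × X)) [IsProbabilityMeasure μ']
    (hμ' : μ' = μ₀.bind (fun p => (f p).map (fun h₁ => (h₁, p.2))))
    -- (i) same 𝒳-marginal and P(H₁ | X₀) = P(H₀ | X₀)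
    (hsnd : μ'.snd = μ₀.snd)
    (hcond_X : ∀ᵐ x ∂μ₀.snd,
      (μ'.map Prod.swap).condKernel x = (μ₀.map Prod.swap).condKernel x)
    -- (ii) P(X₀ | H₁ = h) = g h
    (hcond_H : ∀ᵐ h ∂μ'.fst, μ'.condKernel h = g h)
    (T : H × X → Measure (H × X))
    (hT : T = fun p => (f p).bind (fun h' => (g h').map (fun x' => (h', x')))) :
    ∀ n : ℕ, (fun μ : Measure (H × X) => μ.bind T)^[n] μ₀ = μ₀ ∧
      ((fun μ : Measure (H × X) => μ.bind T)^[n] μ₀).snd = μ₀.snd := by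
  have hμ'_eq : μ' = μ₀ :=
    Measure.eq_of_snd_eq_of_condKernel_swap_ae_eq hsnd (hsnd ▸ hcond_X)
  have hS : Measurable fun q : H × X => (g q.1).map (Prod.mk q.1) :=
    g.measurable_map_prodMk.comp measurable_fst
  have hF : Measurable fun p : H × X => (f p).map (fun h₁ => (h₁, p.2)) :=
    f.measurable_map_comp_prodMk (φ := fun q : (H × X) × H => (q.2, q.1.2)) (by fun_prop)
  have hfix : μ₀.bind T = μ₀ := calc
    μ₀.bind T = μ'.bind fun q => (g q.1).map (Prod.mk q.1) := by
      rw [hμ', Measure.bind_bind hF.aemeasurable hS.aemeasurable, hT]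
      congr 1 with p : 1
      rw [Measure.bind_map (f p) (by fun_prop) hS]
    _ = μ' := Measure.bind_map_prodMk_fst_eq_self hcond_H
    _ = μ₀ := hμ'_eq
  intro n
  rw [Function.iterate_fixed hfix n]
  exact ⟨rfl, rfl⟩
end

section
/- Let ℋ and 𝒳 be standard Borel spaces, f a Markov kernel from ℋ × 𝒳 to ℋ, and g a Markov kernel from ℋ to 𝒳. Let ν be a probability measure on ℋ × 𝒳 whose disintegration over its ℋ-marginal agrees almost everywhere with g (i.e., the law of (H_t, X_t) with P(X_t | H_t) = g), and let the joint law of (H_t, H_{t+1}) be τ = ν.bind (fun (h, x) => (f (h, x)).map (fun h' => (h, h'))). Then the disintegration of τ over its first marginal agrees almost everywhere with the kernel κ : ℋ → measures on ℋ defined by κ h' = (g h').bind (fun x => f (h', x)); in particular, the transition kernel P(H_{t+1} | H_t = h') = ∫ f(h | h', x) g(x | h') dx is the same for every t, depending only on f and g. -/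
/-!
The hypothesis on `ν` says `ν = ν.fst ⊗ₘ g`. Integrating out `x` then shows
`τ = ν.fst ⊗ₘ κ` with `κ = f ∘ₖ (Kernel.id ×ₖ g)`, i.e. `κ h' = (g h').bind (f (h', ·))`,
and uniqueness of disintegrations identifies `τ.condKernel` with `κ` almost everywhere.
-/

open MeasureTheory ProbabilityTheory

section

variable {α β γ : Type*} [MeasurableSpace α] [MeasurableSpace β] [MeasurableSpace γ]

lemma ProbabilityTheory.Kernel.comp_id_prod_apply (f : Kernel (α × β) γ) (g : Kernel α β) [IsSFiniteKernel g]
    (a : α) : (f ∘ₖ (Kernel.id ×ₖ g)) a = (g a).bind (fun b => f (a, b)) := by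
  have hf : Measurable fun b => f (a, b) := f.measurable.comp measurable_prodMk_left
  ext s hs
  rw [Kernel.comp_apply, Kernel.prod_apply, Kernel.id_apply, Measure.dirac_prod,
    Measure.bind_apply hs f.measurable.aemeasurable,
    MeasureTheory.lintegral_map (f.measurable_coe hs) measurable_prodMk_left,
    Measure.bind_apply hs hf.aemeasurable]

lemma ProbabilityTheory.Kernel.deterministic_fst_prod_apply (f : Kernel (α × β) γ) [IsSFiniteKernel f]
    (p : α × β) :
    (Kernel.deterministic Prod.fst measurable_fst ×ₖ f) p = (f p).map (Prod.mk p.1) := by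
  rw [Kernel.prod_apply, Kernel.deterministic_apply, Measure.dirac_prod]

lemma MeasureTheory.Measure.compProd_bind_map_prodMk (μ : Measure α) [SFinite μ] (g : Kernel α β)
    [IsSFiniteKernel g] (f : Kernel (α × β) γ) [IsSFiniteKernel f] :
    (μ ⊗ₘ g).bind (fun p => (f p).map (Prod.mk p.1)) = μ ⊗ₘ (f ∘ₖ (Kernel.id ×ₖ g)) := by
  have hη : (fun p : α × β => (f p).map (Prod.mk p.1)) =
      Kernel.deterministic Prod.fst measurable_fst ×ₖ f :=
    funext fun p => (Kernel.deterministic_fst_prod_apply f p).symm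
  ext s hs
  rw [hη, Measure.bind_apply hs (Kernel.measurable _).aemeasurable,
    Measure.lintegral_compProd (Kernel.measurable_coe _ hs), Measure.compProd_apply hs]
  refine lintegral_congr fun a => ?_
  have hf : Measurable fun b => f (a, b) := f.measurable.comp measurable_prodMk_left
  rw [Kernel.comp_id_prod_apply, Measure.bind_apply (measurable_prodMk_left hs) hf.aemeasurable]
  refine lintegral_congr fun b => ?_
  rw [Kernel.deterministic_fst_prod_apply, Measure.map_apply measurable_prodMk_left hs]

end

/-- **Homogeneity of the H-chain (step in the proof of Theorem 2 of the paper).**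
If `ν = law (H_t, X_t)` satisfies `P(X_t | H_t = h) = g h` a.e., and
`τ = law (H_t, H_{t+1})` is obtained by applying the Markov kernel `f`, then the
disintegration of `τ` over its first marginal agrees a.e. with the kernel
`κ h' = (g h').bind (fun x => f (h', x))`, i.e. the transition kernel
`P(H_{t+1} | H_t = h') = ∫ f(h | h', x) g(x | h') dx` depends only on `f` and `g`. -/
theorem gsn_H_chain_homogeneous
    {H X : Type*}
    [MeasurableSpace H] [StandardBorelSpace H] [Nonempty H]
    [MeasurableSpace X] [StandardBorelSpace X] [Nonempty X]
    (f : Kernel (H × X) H) [IsMarkovKernel f]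
    (g : Kernel H X) [IsMarkovKernel g]
    (ν : Measure (H × X)) [IsProbabilityMeasure ν]
    (hν : ∀ᵐ h ∂ν.fst, ν.condKernel h = g h)
    (τ : Measure (H × H)) [IsProbabilityMeasure τ]
    (hτ : τ = ν.bind (fun p => (f p).map (fun h' => (p.1, h')))) :
    ∀ᵐ h' ∂τ.fst, τ.condKernel h' = (g h').bind (fun x => f (h', x)) := by
  have hν_compProd : ν = ν.fst ⊗ₘ g :=
    (Measure.disintegrate ν ν.condKernel).symm.trans (Measure.compProd_congr hν)
  have hτ_compProd : τ = ν.fst ⊗ₘ (f ∘ₖ (Kernel.id ×ₖ g)) := by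
    rw [hτ, ← Measure.compProd_bind_map_prodMk, ← hν_compProd]
  have hτ_fst : τ.fst = ν.fst := by rw [hτ_compProd, Measure.fst_compProd]
  filter_upwards [eq_condKernel_of_measure_eq_compProd _ (hτ_fst ▸ hτ_compProd)] with h hh
  rw [← hh, Kernel.comp_id_prod_apply]
end

section
/- Let S be a nonempty finite metric space, let ε > 0, and let T : S → S → ℝ be a row-stochastic matrix (T a b ≥ 0 for all a, b, and Σ_b T a b = 1 for all a) such that T a b > 0 whenever dist a b ≤ ε. Suppose that any two points of S are connected by an ε-chain: for all a, b ∈ S there exist points x₀ = a, x₁, …, x_k = b in S with dist x_i x_{i+1} ≤ ε for every i < k. Then T is primitive: there exists N such that for all n ≥ N and all a, b ∈ S, (T^n) a b > 0; in particular the Markov chain defined by T is irreducible and aperiodic (ergodic). -/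
/-! A nonnegative matrix whose directed graph of positive entries carries a loop at every
vertex is primitive as soon as that graph is strongly connected: a positive entry of `T ^ k`
stays positive in all higher powers, since the walk can idle at its endpoint, so `N` can be
taken as the largest of finitely many walk lengths. Here the loops come from `dist a a = 0 ≤ ε`
and the walks from the `ε`-chains. -/

namespace Matrix

variable {n R : Type*} [Fintype n] [DecidableEq n] [Semiring R] [PartialOrder R]
  [IsStrictOrderedRing R] {A : Matrix n n R}

theorem pow_succ_apply_pos (hA : ∀ i j, 0 ≤ A i j) {k : ℕ} {i j l : n}
    (hij : 0 < (A ^ k) i j) (hjl : 0 < A j l) : 0 < (A ^ (k + 1)) i l := by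
  rw [pow_succ, mul_apply]
  exact Finset.sum_pos' (fun c _ => mul_nonneg (pow_apply_nonneg hA k i c) (hA c l))
    ⟨j, Finset.mem_univ j, mul_pos hij hjl⟩

theorem pow_apply_pos_of_chain (hA : ∀ i j, 0 ≤ A i j) {k : ℕ} (x : ℕ → n)
    (hx : ∀ i < k, 0 < A (x i) (x (i + 1))) : 0 < (A ^ k) (x 0) (x k) := by
  induction k with
  | zero => simp
  | succ k ih =>
    exact pow_succ_apply_pos hA (ih fun i hi => hx i (by omega)) (hx k k.lt_succ_self)

theorem pow_apply_pos_of_le (hA : ∀ i j, 0 ≤ A i j) (hdiag : ∀ i, 0 < A i i) {k m : ℕ}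
    (hkm : k ≤ m) {i j : n} (hk : 0 < (A ^ k) i j) : 0 < (A ^ m) i j := by
  induction m, hkm using Nat.le_induction with
  | base => exact hk
  | succ m _ ih => exact pow_succ_apply_pos hA ih (hdiag j)

theorem exists_forall_ge_pow_apply_pos (hA : ∀ i j, 0 ≤ A i j) (hdiag : ∀ i, 0 < A i i)
    (hreach : ∀ i j, ∃ k, 0 < (A ^ k) i j) : ∃ N, ∀ m ≥ N, ∀ i j, 0 < (A ^ m) i j := by
  choose k hk using hreach
  refine ⟨Finset.univ.sup fun p : n × n => k p.1 p.2, fun m hm i j => ?_⟩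
  have hkN : k i j ≤ Finset.univ.sup fun p : n × n => k p.1 p.2 :=
    Finset.le_sup (f := fun p : n × n => k p.1 p.2) (Finset.mem_univ (i, j))
  exact pow_apply_pos_of_le hA hdiag (hkN.trans hm) (hk i j)

end Matrix

open Matrix

theorem local_noise_chain_primitive_general
    {S : Type*} [Fintype S] [DecidableEq S] [MetricSpace S]
    (ε : ℝ) (hε : 0 < ε)
    (T : Matrix S S ℝ)
    (hTnonneg : ∀ a b, 0 ≤ T a b)
    (hTpos : ∀ a b, dist a b ≤ ε → 0 < T a b)
    (hchain : ∀ a b : S, ∃ (k : ℕ) (x : ℕ → S), x 0 = a ∧ x k = b ∧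
      ∀ i < k, dist (x i) (x (i + 1)) ≤ ε) :
    ∃ N, ∀ n ≥ N, ∀ a b, 0 < (T ^ n) a b := by
  have hdiag : ∀ a, 0 < T a a := fun a => hTpos a a (by simpa using hε.le)
  refine exists_forall_ge_pow_apply_pos hTnonneg hdiag fun a b => ?_
  obtain ⟨k, x, rfl, rfl, hx⟩ := hchain a b
  exact ⟨k, pow_apply_pos_of_chain hTnonneg x fun i hi => hTpos _ _ (hx i hi)⟩

/-- **Finite-state formulation of Corollary 2 of the paper.** Let `S` be a nonempty
finite metric space, `ε > 0`, and `T` a row-stochastic matrix on `S` with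
`T a b > 0` whenever `dist a b ≤ ε`. If any two points of `S` are connected by an
`ε`-chain, then `T` is primitive: there is `N` such that `(T^n) a b > 0` for all
`n ≥ N` and all `a, b`; in particular the chain is irreducible and aperiodic. -/
theorem local_noise_chain_primitive
    {S : Type*} [Fintype S] [Nonempty S] [DecidableEq S] [MetricSpace S]
    (ε : ℝ) (hε : 0 < ε)
    (T : Matrix S S ℝ)
    (hTnonneg : ∀ a b, 0 ≤ T a b)
    (hTrow : ∀ a, ∑ b, T a b = 1)
    (hTpos : ∀ a b, dist a b ≤ ε → 0 < T a b)
    (hchain : ∀ a b : S, ∃ (k : ℕ) (x : ℕ → S), x 0 = a ∧ x k = b ∧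
      ∀ i < k, dist (x i) (x (i + 1)) ≤ ε) :
    ∃ N, ∀ n ≥ N, ∀ a b, 0 < (T ^ n) a b :=
  local_noise_chain_primitive_general ε hε T hTnonneg hTpos hchain
end

section
/- Let 𝒳 and 𝒳̃ be standard Borel spaces, let P be a probability measure on 𝒳 (the data-generating distribution), and let C be a Markov kernel from 𝒳 to 𝒳̃ (the corruption distribution C(X̃ | X)). Let J be the joint law on 𝒳 × 𝒳̃ of (X, X̃) with X ~ P and X̃ | X ~ C, and let D be a Markov kernel from 𝒳̃ to 𝒳 that disintegrates J over its 𝒳̃-marginal (the exact Bayes posterior P(X | X̃)). Then P is invariant under the corrupt-then-denoise Markov transition: P.bind (fun x => (C x).bind D) = P. -/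
open MeasureTheory ProbabilityTheory

section

variable {α β : Type*} [MeasurableSpace α] [MeasurableSpace β]

lemma MeasureTheory.Measure.bind_map_prodMk_eq_compProd (μ : Measure α) [SFinite μ]
    (κ : Kernel α β) [IsSFiniteKernel κ] :
    μ.bind (fun a => (κ a).map (Prod.mk a)) = μ ⊗ₘ κ := by
  rw [Measure.compProd_eq_comp_prod]
  congr with a : 1
  rw [Kernel.prod_apply, Kernel.id_apply, Measure.dirac_prod]

/-- `posterior_comp_self` for any kernel `η` with the defining property of the posterior `κ†μ`. -/
lemma ProbabilityTheory.comp_comp_eq_self_of_compProd_eq_map_swap {μ : Measure α} [SFinite μ]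
    {κ : Kernel α β} [IsMarkovKernel κ] {η : Kernel β α} [IsSFiniteKernel η]
    (h : (κ ∘ₘ μ) ⊗ₘ η = (μ ⊗ₘ κ).map Prod.swap) :
    η ∘ₘ κ ∘ₘ μ = μ := by
  rw [← Measure.snd_compProd, h, Measure.snd_map_swap, Measure.fst_compProd]

end

theorem dae_stationary_general
    {X Xt : Type*}
    [MeasurableSpace X]
    [MeasurableSpace Xt]
    (P : Measure X) [IsProbabilityMeasure P]
    (C : Kernel X Xt) [IsMarkovKernel C]
    (J : Measure (X × Xt))
    (hJ : J = P.bind (fun x => (C x).map (fun xt => (x, xt))))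
    (D : Kernel Xt X) [IsMarkovKernel D]
    (hD : J.map Prod.swap = J.snd ⊗ₘ D) :
    P.bind (fun x => (C x).bind (fun xt => D xt)) = P := by
  rw [Measure.bind_map_prodMk_eq_compProd] at hJ
  subst hJ
  rw [Measure.snd_compProd] at hD
  rw [← Measure.bind_bind C.aemeasurable D.aemeasurable]
  exact comp_comp_eq_self_of_compProd_eq_map_swap hD.symm

/-- **Exact-model core of Theorem 1 of the paper (consistency of generative
denoising autoencoders).** Let `P` be the data-generating distribution on a
standard Borel space `𝒳`, `C` a Markov corruption kernel from `𝒳` to `𝒳̃`, `J` the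
joint law of `(X, X̃)` with `X ~ P`, `X̃ | X ~ C`, and `D` a Markov kernel from `𝒳̃`
to `𝒳` disintegrating `J` over its `𝒳̃`-marginal (the exact Bayes posterior
`P(X | X̃)`). Then `P` is invariant under the corrupt-then-denoise transition. -/
theorem dae_stationary
    {X Xt : Type*}
    [MeasurableSpace X] [StandardBorelSpace X] [Nonempty X]
    [MeasurableSpace Xt] [StandardBorelSpace Xt] [Nonempty Xt]
    (P : Measure X) [IsProbabilityMeasure P]
    (C : Kernel X Xt) [IsMarkovKernel C]
    (J : Measure (X × Xt)) [IsProbabilityMeasure J]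
    (hJ : J = P.bind (fun x => (C x).map (fun xt => (x, xt))))
    (D : Kernel Xt X) [IsMarkovKernel D]
    (hD : J.map Prod.swap = J.snd ⊗ₘ D) :
    P.bind (fun x => (C x).bind (fun xt => D xt)) = P :=
  dae_stationary_general P C J hJ D hD
end

section
/- Let A, B, ℋ be nonempty finite types, let p : A × B → ℝ be a probability mass function with full support (p (a, b) > 0 for all (a, b), Σ p = 1), and let C : A × B → ℋ → ℝ be a corruption transition matrix (C (a,b) h ≥ 0, Σ_h C (a,b) h = 1). Define the joint q (a, b, h) = p (a, b) · C (a, b) h, and fix b ∈ B. Define the clamped transition matrix K_b : A → A → ℝ by K_b a a' = Σ_h C (a, b) h · q (a', b, h) / (Σ_{a''} q (a'', b, h)), where the summand is taken to be 0 when C (a, b) h = 0. Then the conditional distribution π_b a = p (a, b) / (Σ_{a'} p (a', b)) is a stationary distribution of K_b: Σ_a π_b a · K_b a a' = π_b a' for all a' ∈ A. -/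
/-!
For each corrupted value `h`, the prior mass `∑ a, w a * C a h` of reaching `h` is exactly the
normaliser of the posterior at `h`, so averaging the resampling step over the prior leaves
`w a' * C a' h`; summing over `h` gives back `w a'` because `C a'` is stochastic. The identity
is linear in `w`, so normalising `w = p (·, b)` to the conditional `π` changes nothing.
-/

open Finset

noncomputable def clampedKernel {A H : Type*} [Fintype A] [Fintype H]
    (w : A → ℝ) (C : A → H → ℝ) (a a' : A) : ℝ :=
  ∑ h, C a h * (w a' * C a' h / ∑ a'', w a'' * C a'' h)

/-- When the sum vanishes, so does every (nonnegative) term, and `x / 0 = 0` makes the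
identity hold as `0 = 0`. -/
theorem Finset.sum_mul_div_sum_of_nonneg {ι : Type*} {s : Finset ι} {f : ι → ℝ}
    (hf : ∀ i ∈ s, 0 ≤ f i) {j : ι} (hj : j ∈ s) :
    (∑ i ∈ s, f i) * (f j / ∑ i ∈ s, f i) = f j := by
  by_cases hsum : ∑ i ∈ s, f i = 0
  · rw [(sum_eq_zero_iff_of_nonneg hf).mp hsum j hj]
    simp
  · exact mul_div_cancel₀ _ hsum

theorem sum_mul_clampedKernel {A H : Type*} [Fintype A] [Fintype H]
    {w : A → ℝ} {C : A → H → ℝ} (hw : ∀ a, 0 ≤ w a) (hC : ∀ a h, 0 ≤ C a h)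
    (hCrow : ∀ a, ∑ h, C a h = 1) (a' : A) :
    ∑ a, w a * clampedKernel w C a a' = w a' := by
  have hposterior : ∀ h, ∑ a, w a * (C a h * (w a' * C a' h / ∑ a'', w a'' * C a'' h))
      = w a' * C a' h := fun h => by
    simp only [← mul_assoc, ← sum_mul]
    exact sum_mul_div_sum_of_nonneg (fun a _ => mul_nonneg (hw a) (hC a h)) (mem_univ a')
  calc ∑ a, w a * clampedKernel w C a a'
      = ∑ h, ∑ a, w a * (C a h * (w a' * C a' h / ∑ a'', w a'' * C a'' h)) := by
        simp only [clampedKernel, mul_sum]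
        exact sum_comm
    _ = w a' := by simp only [hposterior, ← mul_sum, hCrow, mul_one]

theorem clamped_chain_stationary_general
    {A B H : Type*}
    [Fintype A] [Fintype H]
    (p : A × B → ℝ)
    (hp : ∀ ab, 0 < p ab)
    (C : A × B → H → ℝ)
    (hC : ∀ ab h, 0 ≤ C ab h) (hCrow : ∀ ab, ∑ h, C ab h = 1)
    (q : A × B × H → ℝ)
    (hq : q = fun z => p (z.1, z.2.1) * C (z.1, z.2.1) z.2.2)
    (b : B)
    (K : A → A → ℝ)
    (hK : K = fun a a' => ∑ h, C (a, b) h * (q (a', b, h) / ∑ a'', q (a'', b, h)))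
    (π : A → ℝ)
    (hπ : π = fun a => p (a, b) / ∑ a', p (a', b)) :
    ∀ a', ∑ a, π a * K a a' = π a' := by
  subst hq hK hπ
  intro a'
  have hstat := sum_mul_clampedKernel (w := fun a => p (a, b)) (C := fun a => C (a, b))
    (fun a => (hp _).le) (fun a => hC _) (fun a => hCrow _) a'
  simp only [div_mul_eq_mul_div, ← sum_div]
  exact congrArg (· / ∑ a', p (a', b)) hstat

/-- **Proposition 1 of the paper (handling missing inputs / structured outputs by
clamping), finite-state version.** Let `p` be a full-support pmf on `A × B`, `C` a
corruption transition matrix from `A × B` to `ℋ`, and `q (a, b, h) = p (a, b) * C (a, b) h`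
the joint. Fix `b : B` and let the clamped transition matrix be
`K a a' = Σ_h C (a, b) h * q (a', b, h) / (Σ_{a''} q (a'', b, h))`
(the summand being `0` when `C (a, b) h = 0`; note that in that degenerate case the
Lean convention `x / 0 = 0` also applies). Then the conditional distribution
`π a = p (a, b) / (Σ_{a'} p (a', b))` is a stationary distribution of `K`. -/
theorem clamped_chain_stationary
    {A B H : Type*}
    [Fintype A] [Nonempty A] [Fintype B] [Nonempty B] [Fintype H] [Nonempty H]
    (p : A × B → ℝ)
    (hp : ∀ ab, 0 < p ab) (hpsum : ∑ ab, p ab = 1)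
    (C : A × B → H → ℝ)
    (hC : ∀ ab h, 0 ≤ C ab h) (hCrow : ∀ ab, ∑ h, C ab h = 1)
    (q : A × B × H → ℝ)
    (hq : q = fun z => p (z.1, z.2.1) * C (z.1, z.2.1) z.2.2)
    (b : B)
    (K : A → A → ℝ)
    (hK : K = fun a a' => ∑ h, C (a, b) h * (q (a', b, h) / ∑ a'', q (a'', b, h)))
    (π : A → ℝ)
    (hπ : π = fun a => p (a, b) / ∑ a', p (a', b)) :
    ∀ a', ∑ a, π a * K a a' = π a' :=
  clamped_chain_stationary_general p hp C hC hCrow q hq b K hK π hπ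
end

section
/- Let I be a nonempty finite index type, for each i ∈ I let S_i be a nonempty finite type, let X = Π_{i ∈ I} S_i, and let p : X → ℝ be a probability mass function with full support (p x > 0 for all x, Σ p = 1). Define the random-scan Gibbs transition matrix K : X → X → ℝ by K x y = (1 / |I|) · Σ_{i ∈ I} [y agrees with x off coordinate i] · p y / (Σ_{z : X, z agrees with x off coordinate i} p z). Then K is primitive (there exists N such that (K^n) x y > 0 for all n ≥ N and all x, y ∈ X), and p is the unique stationary distribution of K. -/
/-!
Resampling a single coordinate `i` from its conditional preserves `p`: on each fibre
`{z | z = x off i}` the kernel is the normalised restriction of `p`, and the normaliser is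
constant on the fibre. Averaging over `i` gives stationarity. Since any configuration can be
turned into any other by updating the coordinates one at a time, `K ^ |I|` is entrywise positive,
and the positive diagonal of `K` keeps all higher powers positive. For uniqueness, if `π` is
stationary and `c = max π / p`, then `c • p - π` is a nonnegative `K ^ |I|`-invariant vector
vanishing somewhere, hence zero; comparing total masses gives `c = 1`.
-/

open Matrix Finset

namespace Matrix

section NonnegMatrix

variable {α : Type*} [Semiring α] [PartialOrder α] [IsStrictOrderedRing α]

lemma mul_apply_pos_of_nonneg {l m n : Type*} [Fintype m] {A : Matrix l m α} {B : Matrix m n α}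
    (hA : ∀ x y, 0 ≤ A x y) (hB : ∀ x y, 0 ≤ B x y) {x : l} {y : n} {z : m}
    (hxz : 0 < A x z) (hzy : 0 < B z y) : 0 < (A * B) x y :=
  sum_pos' (fun w _ => mul_nonneg (hA x w) (hB w y)) ⟨z, mem_univ z, mul_pos hxz hzy⟩

lemma pow_apply_pos_of_le_s15 {n : Type*} [Fintype n] [DecidableEq n] {M : Matrix n n α}
    (hM : ∀ x y, 0 ≤ M x y) (hdiag : ∀ x, 0 < M x x) {N : ℕ}
    (hN : ∀ x y, 0 < (M ^ N) x y) :
    ∀ k ≥ N, ∀ x y, 0 < (M ^ k) x y := by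
  intro k hk
  induction k, hk using Nat.le_induction with
  | base => exact hN
  | succ k _ ih =>
    intro x y
    rw [pow_succ]
    exact mul_apply_pos_of_nonneg (pow_apply_nonneg hM k) hM (ih x y) (hdiag y)

variable {I : Type*} [Fintype I] [DecidableEq I] {S : I → Type*} [∀ i, Fintype (S i)]
  [DecidableEq (∀ i, S i)]

lemma pow_card_apply_pos_of_single_site {M : Matrix (∀ i, S i) (∀ i, S i) α}
    (hM : ∀ x y, 0 ≤ M x y) (hsite : ∀ x y i, (∀ j, j ≠ i → y j = x j) → 0 < M x y)
    (s : Finset I) {x y : ∀ i, S i} (hxy : ∀ j ∉ s, y j = x j) : 0 < (M ^ #s) x y := by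
  induction s using Finset.induction_on generalizing x with
  | empty =>
    obtain rfl : y = x := funext fun j => hxy j (notMem_empty j)
    simp
  | @insert i s hi ih =>
    rw [card_insert_of_notMem hi, pow_succ']
    refine mul_apply_pos_of_nonneg hM (pow_apply_nonneg hM _)
      (hsite x (Function.update x i (y i)) i fun j hj => Function.update_of_ne hj _ _)
      (ih fun j hj => ?_)
    by_cases hji : j = i
    · subst hji
      simp
    · rw [Function.update_of_ne hji]
      exact hxy j (by simp [hji, hj])

lemma pow_fintype_card_apply_pos_of_single_site {M : Matrix (∀ i, S i) (∀ i, S i) α}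
    (hM : ∀ x y, 0 ≤ M x y) (hsite : ∀ x y i, (∀ j, j ≠ i → y j = x j) → 0 < M x y)
    (x y : ∀ i, S i) : 0 < (M ^ Fintype.card I) x y :=
  pow_card_apply_pos_of_single_site hM hsite univ fun j hj => absurd (mem_univ j) hj

end NonnegMatrix

lemma vecMul_pow_eq_self {α n : Type*} [Semiring α] [Fintype n] [DecidableEq n]
    {M : Matrix n n α} {v : n → α} (hv : v ᵥ* M = v) (k : ℕ) : v ᵥ* M ^ k = v := by
  induction k with
  | zero => simp
  | succ k ih => rw [pow_succ, ← vecMul_vecMul, ih, hv]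

section PositiveMatrix

variable {α : Type*} [Field α] [LinearOrder α] [IsStrictOrderedRing α] {n : Type*} [Fintype n]
  {M : Matrix n n α}

lemma eq_zero_of_vecMul_eq_self (hM : ∀ x y, 0 < M x y) {v : n → α} (hv : 0 ≤ v)
    (hvM : v ᵥ* M = v) {x₀ : n} (hx₀ : v x₀ = 0) : v = 0 := by
  have hsum : ∑ x, v x * M x x₀ = 0 := (congrFun hvM x₀).trans hx₀
  funext x
  have hterm := (sum_eq_zero_iff_of_nonneg fun x _ => mul_nonneg (hv x) (hM x x₀).le).1
    hsum x (mem_univ x)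
  exact (mul_eq_zero.1 hterm).resolve_right (hM x x₀).ne'

lemma exists_eq_smul_of_vecMul_eq_self (hM : ∀ x y, 0 < M x y) {p π : n → α}
    (hp : ∀ x, 0 < p x) (hpM : p ᵥ* M = p) (hπM : π ᵥ* M = π) :
    ∃ c : α, π = c • p := by
  cases isEmpty_or_nonempty n
  · exact ⟨0, Subsingleton.elim _ _⟩
  obtain ⟨x₀, hx₀⟩ := Finite.exists_max fun x => π x / p x
  refine ⟨π x₀ / p x₀, (sub_eq_zero.1 ?_).symm⟩
  refine eq_zero_of_vecMul_eq_self hM (x₀ := x₀) (fun x => ?_) ?_ ?_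
  · simpa [sub_nonneg, ← div_le_iff₀ (hp x)] using hx₀ x
  · rw [sub_vecMul, smul_vecMul, hpM, hπM]
  · simp [div_mul_cancel₀ _ (hp x₀).ne']

end PositiveMatrix

end Matrix

section Gibbs

variable {I : Type*} [Fintype I] [DecidableEq I] {S : I → Type*} [∀ i, Fintype (S i)]
  [∀ i, DecidableEq (S i)] (p : (∀ i, S i) → ℝ)

noncomputable def condNormalizer (i : I) (x : ∀ i, S i) : ℝ :=
  ∑ z ∈ univ.filter (fun z : ∀ i, S i => ∀ j, j ≠ i → z j = x j), p z

/-- Resample coordinate `i` from `p(X_i = · | X_{-i} = x_{-i})`. -/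
noncomputable def singleSiteGibbs (i : I) : Matrix (∀ i, S i) (∀ i, S i) ℝ :=
  of fun x y => if ∀ j, j ≠ i → y j = x j then p y / condNormalizer p i x else 0

noncomputable def randomScanGibbs : Matrix (∀ i, S i) (∀ i, S i) ℝ :=
  (Fintype.card I : ℝ)⁻¹ • ∑ i, singleSiteGibbs p i

variable {p}

lemma condNormalizer_pos (hp : ∀ x, 0 < p x) (i : I) (x : ∀ i, S i) :
    0 < condNormalizer p i x :=
  sum_pos (fun z _ => hp z) ⟨x, by simp⟩

lemma condNormalizer_congr {i : I} {x y : ∀ i, S i} (hxy : ∀ j, j ≠ i → y j = x j) :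
    condNormalizer p i y = condNormalizer p i x := by
  unfold condNormalizer
  congr 1
  exact filter_congr fun z _ => forall₂_congr fun j hj => by rw [hxy j hj]

lemma singleSiteGibbs_nonneg (hp : ∀ x, 0 < p x) (i : I) (x y : ∀ i, S i) :
    0 ≤ singleSiteGibbs p i x y := by
  rw [singleSiteGibbs, of_apply]
  split_ifs
  · exact (div_pos (hp y) (condNormalizer_pos hp i x)).le
  · exact le_rfl

lemma singleSiteGibbs_pos (hp : ∀ x, 0 < p x) {i : I} {x y : ∀ i, S i}
    (hxy : ∀ j, j ≠ i → y j = x j) : 0 < singleSiteGibbs p i x y := by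
  rw [singleSiteGibbs, of_apply, if_pos hxy]
  exact div_pos (hp y) (condNormalizer_pos hp i x)

lemma vecMul_singleSiteGibbs (hp : ∀ x, 0 < p x) (i : I) : p ᵥ* singleSiteGibbs p i = p := by
  ext y
  have hfibre : univ.filter (fun x : ∀ i, S i => ∀ j, j ≠ i → y j = x j)
      = univ.filter (fun z : ∀ i, S i => ∀ j, j ≠ i → z j = y j) :=
    filter_congr fun z _ => forall₂_congr fun _ _ => eq_comm
  calc (p ᵥ* singleSiteGibbs p i) y
      = ∑ x, if ∀ j, j ≠ i → y j = x j then p x * (p y / condNormalizer p i x) else 0 := by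
        simp only [vecMul, dotProduct, singleSiteGibbs, of_apply, mul_ite, mul_zero]
    _ = ∑ x ∈ univ.filter (fun x : ∀ i, S i => ∀ j, j ≠ i → y j = x j),
          p x * (p y / condNormalizer p i y) := by
        rw [← sum_filter]
        refine sum_congr rfl fun x hx => ?_
        rw [condNormalizer_congr (mem_filter.1 hx).2]
    _ = p y := by
        rw [← sum_mul, hfibre, ← condNormalizer,
          mul_div_cancel₀ _ (condNormalizer_pos hp i y).ne']

lemma randomScanGibbs_apply (x y : ∀ i, S i) :
    randomScanGibbs p x y = (Fintype.card I : ℝ)⁻¹ * ∑ i, singleSiteGibbs p i x y := by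
  simp only [randomScanGibbs, Matrix.smul_apply, Matrix.sum_apply, smul_eq_mul]

lemma randomScanGibbs_nonneg (hp : ∀ x, 0 < p x) (x y : ∀ i, S i) :
    0 ≤ randomScanGibbs p x y := by
  rw [randomScanGibbs_apply]
  exact mul_nonneg (by positivity) (sum_nonneg fun i _ => singleSiteGibbs_nonneg hp i x y)

lemma randomScanGibbs_pos (hp : ∀ x, 0 < p x) {i : I} {x y : ∀ i, S i}
    (hxy : ∀ j, j ≠ i → y j = x j) : 0 < randomScanGibbs p x y := by
  rw [randomScanGibbs_apply]
  have : (0 : ℝ) < Fintype.card I := by exact_mod_cast Fintype.card_pos_iff.2 ⟨i⟩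
  exact mul_pos (inv_pos.2 this) (sum_pos' (fun k _ => singleSiteGibbs_nonneg hp k x y)
    ⟨i, mem_univ i, singleSiteGibbs_pos hp hxy⟩)

lemma vecMul_randomScanGibbs [Nonempty I] (hp : ∀ x, 0 < p x) :
    p ᵥ* randomScanGibbs p = p := by
  simp only [randomScanGibbs, vecMul_smul, vecMul_sum, vecMul_singleSiteGibbs hp, sum_const,
    card_univ]
  rw [← Nat.cast_smul_eq_nsmul ℝ, smul_smul, inv_mul_cancel₀ (by positivity), one_smul]

end Gibbs

theorem random_scan_gibbs_primitive_unique_stationary_general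
    {I : Type*} [Fintype I] [Nonempty I] [DecidableEq I]
    {S : I → Type*} [∀ i, Fintype (S i)] [∀ i, DecidableEq (S i)]
    (p : (∀ i, S i) → ℝ)
    (hp : ∀ x, 0 < p x) (hpsum : ∑ x, p x = 1)
    (K : Matrix (∀ i, S i) (∀ i, S i) ℝ)
    (hK : K = Matrix.of fun x y => (Fintype.card I : ℝ)⁻¹ *
      ∑ i, if ∀ j, j ≠ i → y j = x j then
          p y / ∑ z ∈ Finset.univ.filter (fun z : ∀ i, S i => ∀ j, j ≠ i → z j = x j), p z
        else 0) :
    (∃ N, ∀ n ≥ N, ∀ x y, 0 < (K ^ n) x y) ∧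
    (∀ y, ∑ x, p x * K x y = p y) ∧
    (∀ π : (∀ i, S i) → ℝ, (∀ x, 0 ≤ π x) → (∑ x, π x = 1) →
      (∀ y, ∑ x, π x * K x y = π y) → π = p) := by
  obtain rfl : K = randomScanGibbs p := by
    rw [hK]
    ext x y
    simp [randomScanGibbs, singleSiteGibbs, condNormalizer, Matrix.sum_apply]
  have hK0 := randomScanGibbs_nonneg hp
  have hsite : ∀ x y i, (∀ j, j ≠ i → y j = x j) → 0 < randomScanGibbs p x y :=
    fun _ _ _ => randomScanGibbs_pos hp
  have hdiag : ∀ x, 0 < randomScanGibbs p x x :=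
    fun x => hsite x x (Classical.arbitrary I) fun _ _ => rfl
  have hpow := pow_fintype_card_apply_pos_of_single_site hK0 hsite
  have hstat := vecMul_randomScanGibbs hp
  refine ⟨⟨_, pow_apply_pos_of_le_s15 hK0 hdiag hpow⟩, congrFun hstat, fun π _ hπ1 hπ => ?_⟩
  obtain ⟨c, rfl⟩ := exists_eq_smul_of_vecMul_eq_self hpow hp (vecMul_pow_eq_self hstat _)
    (vecMul_pow_eq_self (funext hπ) _)
  obtain rfl : c = 1 := by simpa [← mul_sum, hpsum] using hπ1
  exact one_smul ℝ p

/-- **Ergodicity/consistency part of Proposition 2 of the paper.** The random-scan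
Gibbs transition matrix `K` associated with a full-support pmf `p` on `X = Π i, S i`
(pick a coordinate `i` uniformly at random, resample it from the conditional
`p(X_i = y_i | X_{-i} = x_{-i})`) is primitive, and `p` is its unique stationary
distribution. -/
theorem random_scan_gibbs_primitive_unique_stationary
    {I : Type*} [Fintype I] [Nonempty I] [DecidableEq I]
    {S : I → Type*} [∀ i, Fintype (S i)] [∀ i, Nonempty (S i)] [∀ i, DecidableEq (S i)]
    (p : (∀ i, S i) → ℝ)
    (hp : ∀ x, 0 < p x) (hpsum : ∑ x, p x = 1)
    (K : Matrix (∀ i, S i) (∀ i, S i) ℝ)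
    (hK : K = Matrix.of fun x y => (Fintype.card I : ℝ)⁻¹ *
      ∑ i, if ∀ j, j ≠ i → y j = x j then
          p y / ∑ z ∈ Finset.univ.filter (fun z : ∀ i, S i => ∀ j, j ≠ i → z j = x j), p z
        else 0) :
    (∃ N, ∀ n ≥ N, ∀ x y, 0 < (K ^ n) x y) ∧
    (∀ y, ∑ x, p x * K x y = p y) ∧
    (∀ π : (∀ i, S i) → ℝ, (∀ x, 0 ≤ π x) → (∑ x, π x = 1) →
      (∀ y, ∑ x, π x * K x y = π y) → π = p) :=
  random_scan_gibbs_primitive_unique_stationary_general p hp hpsum K hK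
end
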